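/- Let σ > 0, r > 0 and a ∈ (0, 1], and set x* = (r² − 2σ²·ln a)/(2r). Then 2·TV_a( N(0, σ²), N(r, σ²) ) = 2Φ(x*/σ) − 1 + a·(1 − 2Φ((x* − r)/σ)), where Φ is the cumulative distribution function of the standard normal distribution. -/

import Mathlib

/-!
The ratio `a·φ_{r,σ}(x) / φ_{0,σ}(x) = exp(log a + (2rx − r²)/(2σ²))` is increasing in `x` and
equals `1` exactly at `x*`, so `φ_{0,σ} − a·φ_{r,σ}` is nonnegative on `(−∞, x*]` and nonpositive
beyond it. Hence `∫ |φ_{0,σ} − a·φ_{r,σ}| = 2 ∫_{(−∞, x*]} (φ_{0,σ} − a·φ_{r,σ}) − (1 − a)`, and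
standardising `x ↦ (x − u)/σ` turns the Gaussian masses of `(−∞, x*]` into values of `Φ`.
-/

open MeasureTheory

/-- `TV_a(X, Y) = (1/2) ∫ |f(x) − a·g(x)| dx` for densities `f, g` on `ℝ`. -/
noncomputable def TVa (a : ℝ) (f g : ℝ → ℝ) : ℝ :=
  (1 / 2) * ∫ x, |f x - a * g x|

/-- Density of the one-dimensional Gaussian `N(u, σ²)` on `ℝ`. -/
noncomputable def gauss1 (σ u : ℝ) (x : ℝ) : ℝ :=
  (2 * Real.pi * σ ^ 2) ^ (-(1 : ℝ) / 2) * Real.exp (-(x - u) ^ 2 / (2 * σ ^ 2))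

/-- The standard normal cumulative distribution function `Φ`. -/
noncomputable def stdNormalCDF (x : ℝ) : ℝ :=
  ∫ t in Set.Iic x, (Real.sqrt (2 * Real.pi))⁻¹ * Real.exp (-t ^ 2 / 2)

open ProbabilityTheory Real Set
open scoped NNReal

lemma integral_abs_eq_two_mul_setIntegral_sub_integral {α : Type*} [MeasurableSpace α]
    {μ : Measure α} {f : α → ℝ} {s : Set α} (hs : MeasurableSet s) (hf : Integrable f μ)
    (h_nonneg : ∀ x ∈ s, 0 ≤ f x) (h_nonpos : ∀ x ∉ s, f x ≤ 0) :
    ∫ x, |f x| ∂μ = 2 * ∫ x in s, f x ∂μ - ∫ x, f x ∂μ := by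
  have h_on : ∫ x in s, |f x| ∂μ = ∫ x in s, f x ∂μ :=
    setIntegral_congr_fun hs fun x hx => abs_of_nonneg (h_nonneg x hx)
  have h_off : ∫ x in sᶜ, |f x| ∂μ = -∫ x in sᶜ, f x ∂μ := by
    rw [← integral_neg]
    exact setIntegral_congr_fun hs.compl fun x hx => abs_of_nonpos (h_nonpos x hx)
  rw [← integral_add_compl hs hf.abs, ← integral_add_compl hs hf, h_on, h_off]
  ring

lemma gauss1_eq_gaussianPDFReal (σ u : ℝ) :
    gauss1 σ u = gaussianPDFReal u (.mk (σ ^ 2) (sq_nonneg σ)) := by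
  ext x
  rw [gauss1, gaussianPDFReal, NNReal.coe_mk, sqrt_eq_rpow, ← rpow_neg (by positivity), neg_div]

lemma gaussianReal_real_apply_eq_integral (μ : ℝ) {v : ℝ≥0} (hv : v ≠ 0) (s : Set ℝ) :
    (gaussianReal μ v).real s = ∫ x in s, gaussianPDFReal μ v x := by
  rw [measureReal_def, gaussianReal_apply_eq_integral _ hv,
    ENNReal.toReal_ofReal (integral_nonneg fun _ => gaussianPDFReal_nonneg _ _ _)]

lemma stdNormalCDF_eq_gaussianReal_real (x : ℝ) :
    stdNormalCDF x = (gaussianReal 0 1).real (Iic x) := by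
  rw [gaussianReal_real_apply_eq_integral _ one_ne_zero]
  simp [stdNormalCDF, gaussianPDFReal]

lemma gaussianReal_map_sub_div_sqrt (μ : ℝ) {v : ℝ≥0} (hv : v ≠ 0) :
    (gaussianReal μ v).map (fun x => (x - μ) / √v) = gaussianReal 0 1 := by
  have h_comp : (fun x => (x - μ) / √v) = (· / √v) ∘ (· - μ) := rfl
  rw [h_comp, ← Measure.map_map (by fun_prop) (by fun_prop), gaussianReal_map_sub_const,
    gaussianReal_map_div_const, sub_self, zero_div]
  congr
  ext
  simp [sq_sqrt, hv]

lemma setIntegral_gaussianPDFReal_Iic (μ : ℝ) {v : ℝ≥0} (hv : v ≠ 0) (t : ℝ) :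
    ∫ x in Iic t, gaussianPDFReal μ v x = stdNormalCDF ((t - μ) / √v) := by
  have h_preimage : (fun x => (x - μ) / √v) ⁻¹' Iic ((t - μ) / √v) = Iic t := by
    ext x
    simp [div_le_div_iff_of_pos_right (by positivity : (0 : ℝ) < √v)]
  rw [stdNormalCDF_eq_gaussianReal_real, ← gaussianReal_map_sub_div_sqrt μ hv,
    map_measureReal_apply (by fun_prop) measurableSet_Iic, h_preimage,
    gaussianReal_real_apply_eq_integral _ hv]

lemma mul_gaussianPDFReal_le_gaussianPDFReal_iff {v : ℝ≥0} (hv : v ≠ 0) {r a : ℝ} (hr : 0 < r)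
    (ha : 0 < a) (x : ℝ) :
    a * gaussianPDFReal r v x ≤ gaussianPDFReal 0 v x ↔
      x ≤ (r ^ 2 - 2 * v * log a) / (2 * r) := by
  have hv' : (0 : ℝ) < v := by positivity
  have h_exponent :
      -(x - 0) ^ 2 / (2 * v) - -(x - r) ^ 2 / (2 * v) = (r ^ 2 - 2 * r * x) / (2 * v) := by
    ring
  rw [gaussianPDFReal, gaussianPDFReal, mul_left_comm, mul_le_mul_iff_right₀ (by positivity),
    ← le_div_iff₀ (exp_pos _), ← exp_sub, ← log_le_iff_le_exp ha, h_exponent,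
    le_div_iff₀ (by positivity), le_div_iff₀ (by positivity)]
  constructor <;> intro h <;> linarith

/-- Closed form for `TV_a` between one-dimensional Gaussians: with
`x* = (r² − 2σ²·ln a)/(2r)`,
`2·TV_a(N(0, σ²), N(r, σ²)) = 2Φ(x*/σ) − 1 + a·(1 − 2Φ((x* − r)/σ))`. -/
theorem tva_gauss_closed_form (σ r a : ℝ) (hσ : 0 < σ) (hr : 0 < r)
    (ha : a ∈ Set.Ioc (0 : ℝ) 1) :
    2 * TVa a (gauss1 σ 0) (gauss1 σ r)
      = 2 * stdNormalCDF ((r ^ 2 - 2 * σ ^ 2 * Real.log a) / (2 * r) / σ) - 1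
        + a * (1 - 2 * stdNormalCDF (((r ^ 2 - 2 * σ ^ 2 * Real.log a) / (2 * r) - r) / σ)) := by
  set v : ℝ≥0 := .mk (σ ^ 2) (sq_nonneg σ)
  have hv : v ≠ 0 := by simp [v, ← NNReal.coe_ne_zero, hσ.ne']
  have h_sqrt : √v = σ := sqrt_sq hσ.le
  set xs := (r ^ 2 - 2 * σ ^ 2 * Real.log a) / (2 * r)
  set f := fun x => gaussianPDFReal 0 v x - a * gaussianPDFReal r v x
  have hf : Integrable f :=
    (integrable_gaussianPDFReal 0 v).sub ((integrable_gaussianPDFReal r v).const_mul a)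
  have h_total : ∫ x, f x = 1 - a := by
    rw [integral_sub (integrable_gaussianPDFReal 0 v)
        ((integrable_gaussianPDFReal r v).const_mul a),
      integral_const_mul, integral_gaussianPDFReal_eq_one _ hv,
      integral_gaussianPDFReal_eq_one _ hv, mul_one]
  have h_left :
      ∫ x in Iic xs, f x = stdNormalCDF (xs / σ) - a * stdNormalCDF ((xs - r) / σ) := by
    rw [integral_sub (integrable_gaussianPDFReal 0 v).integrableOn
      ((integrable_gaussianPDFReal r v).const_mul a).integrableOn, integral_const_mul,
      setIntegral_gaussianPDFReal_Iic _ hv, setIntegral_gaussianPDFReal_Iic _ hv, h_sqrt, sub_zero]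
  have h_sign : ∀ x, a * gaussianPDFReal r v x ≤ gaussianPDFReal 0 v x ↔ x ≤ xs :=
    mul_gaussianPDFReal_le_gaussianPDFReal_iff hv hr ha.1
  have h_abs := integral_abs_eq_two_mul_setIntegral_sub_integral measurableSet_Iic hf
    (fun x hx => sub_nonneg.2 ((h_sign x).2 hx))
    (fun x hx => sub_nonpos.2 (not_le.1 (mt (h_sign x).1 hx)).le)
  rw [TVa, gauss1_eq_gaussianPDFReal, gauss1_eq_gaussianPDFReal]
  change 2 * (1 / 2 * ∫ x, |f x|) = _
  rw [h_abs, h_total, h_left]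
  ring
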